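/- Let A, B be bounded positive operators on a Hilbert space with sum C = A + B, and suppose B ≤ αA for some α ≥ 0. Then for all n ≥ 1, B − (nA : B) ≤ (α/(n+α))·B in the Loewner order, and consequently the parallel sums nA : B converge strongly and increasingly to B as n → ∞. -/

import Mathlib

/-!
For `ε > 0` the operators `X = n A + ε` and `Y = B + ε` are invertible, and their parallel sum
`(X⁻¹ + Y⁻¹)⁻¹` is monotone in `X` and bounded by `Y`; these inequalities pass to the strong limit
`P n`. Since `n A ≥ (n / α) B`, monotonicity and the functional calculus of `B` give
`P n ≥ (n / (n + α)) B`, i.e. `0 ≤ B - P n ≤ (α / (n + α)) B`, so `P n → B` even in norm.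
-/

open Filter Topology

noncomputable def parallelSum {A : Type*} [Semiring A] (a b : A) : A :=
  Ring.inverse (Ring.inverse a + Ring.inverse b)

section CStarAlgebra

variable {A : Type*} [CStarAlgebra A]

lemma cfc_parallelSum {f g : ℝ → ℝ} {a : A} (hf : ∀ x ∈ spectrum ℝ a, 0 < f x)
    (hg : ∀ x ∈ spectrum ℝ a, 0 < g x) (hfc : ContinuousOn f (spectrum ℝ a))
    (hgc : ContinuousOn g (spectrum ℝ a)) (ha : IsSelfAdjoint a) :
    parallelSum (cfc f a) (cfc g a) = cfc (fun x => ((f x)⁻¹ + (g x)⁻¹)⁻¹) a := by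
  have hf0 : ∀ x ∈ spectrum ℝ a, f x ≠ 0 := fun x hx => (hf x hx).ne'
  have hg0 : ∀ x ∈ spectrum ℝ a, g x ≠ 0 := fun x hx => (hg x hx).ne'
  rw [parallelSum, ← cfc_inv f a hf0, ← cfc_inv g a hg0,
    ← cfc_add a (fun x => (f x)⁻¹) (fun x => (g x)⁻¹) (hfc.inv₀ hf0) (hgc.inv₀ hg0),
    ← cfc_inv _ a (fun x hx => (add_pos (inv_pos.2 (hf x hx)) (inv_pos.2 (hg x hx))).ne')
      ((hfc.inv₀ hf0).add (hgc.inv₀ hg0))]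

variable [PartialOrder A] [StarOrderedRing A] {a a' b : A}

lemma IsStrictlyPositive.parallelSum (ha : IsStrictlyPositive a) (hb : IsStrictlyPositive b) :
    IsStrictlyPositive (parallelSum a b) :=
  (ha.ringInverse.add_nonneg hb.ringInverse.nonneg).ringInverse

lemma parallelSum_le_right (ha : IsStrictlyPositive a) (hb : IsStrictlyPositive b) :
    parallelSum a b ≤ b :=
  calc parallelSum a b ≤ Ring.inverse (Ring.inverse b) :=
        CStarAlgebra.ringInverse_le_ringInverse (le_add_of_nonneg_left ha.ringInverse.nonneg)
          hb.ringInverse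
    _ = b := Ring.inverse_inverse hb.isUnit

lemma parallelSum_mono_left (ha : IsStrictlyPositive a) (hb : IsStrictlyPositive b)
    (haa' : a ≤ a') : parallelSum a b ≤ parallelSum a' b :=
  CStarAlgebra.ringInverse_le_ringInverse
    (add_le_add_left (CStarAlgebra.ringInverse_le_ringInverse haa' ha) _)
    ((ha.of_le haa').ringInverse.add_nonneg hb.ringInverse.nonneg)

lemma isStrictlyPositive_add_smul_one (ha : 0 ≤ a) {ε : ℝ} (hε : 0 < ε) :
    IsStrictlyPositive (a + ε • (1 : A)) :=
  (IsStrictlyPositive.smul hε isStrictlyPositive_one).nonneg_add ha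

lemma div_add_one_mul_le_inv_add_inv_inv {t ε x : ℝ} (ht : 0 ≤ t) (hε : 0 < ε) (hx : 0 ≤ x) :
    t / (t + 1) * x ≤ ((t * x + ε)⁻¹ + (x + ε)⁻¹)⁻¹ := by
  have hp : 0 < t * x + ε := by positivity
  have hq : 0 < x + ε := by positivity
  rw [inv_add_inv hp.ne' hq.ne', inv_div, div_mul_eq_mul_div,
    div_le_div_iff₀ (by positivity) (by positivity)]
  nlinarith [mul_nonneg (mul_nonneg hε.le hx) (sq_nonneg t), mul_nonneg hε.le hx, mul_pos hε hε,
    mul_nonneg (mul_nonneg ht hε.le) hε.le]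

lemma smul_le_parallelSum_smul_add_smul_one (hb : 0 ≤ b) {t ε : ℝ} (ht : 0 ≤ t) (hε : 0 < ε) :
    (t / (t + 1)) • b ≤ parallelSum (t • b + ε • 1) (b + ε • 1) := by
  have hspec : ∀ x ∈ spectrum ℝ b, 0 ≤ x := fun x hx => spectrum_nonneg_of_nonneg hb hx
  have hpos : ∀ x ∈ spectrum ℝ b, 0 < t * x + ε ∧ 0 < x + ε := fun x hx =>
    have := hspec x hx; ⟨by positivity, by positivity⟩
  have hl : t • b + ε • 1 = cfc (fun x => t * x + ε) b := by
    rw [cfc_add_const ε (fun x => t * x) b, cfc_const_mul_id t b, Algebra.algebraMap_eq_smul_one]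
  have hr : b + ε • 1 = cfc (fun x => x + ε) b := by
    rw [cfc_add_const ε (fun x => x) b, cfc_id' ℝ b, Algebra.algebraMap_eq_smul_one]
  rw [hl, hr, cfc_parallelSum (fun x hx => (hpos x hx).1) (fun x hx => (hpos x hx).2)
      (by fun_prop) (by fun_prop) (.of_nonneg hb), ← cfc_const_mul_id (R := ℝ) _ b]
  refine cfc_mono (fun x hx => div_add_one_mul_le_inv_add_inv_inv ht hε (hspec x hx))
    (by fun_prop) ?_
  exact ((continuousOn_inv₀.comp (by fun_prop) fun x hx => (hpos x hx).1.ne').add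
    (continuousOn_inv₀.comp (by fun_prop) fun x hx => (hpos x hx).2.ne')).inv₀
    fun x hx => (add_pos (inv_pos.2 (hpos x hx).1) (inv_pos.2 (hpos x hx).2)).ne'

lemma smul_le_parallelSum_of_le_smul (hb : 0 ≤ b) {α : ℝ} (hα : 0 < α)
    (hba : b ≤ α • a) {t ε : ℝ} (ht : 0 ≤ t) (hε : 0 < ε) :
    (t / (t + α)) • b ≤ parallelSum (t • a + ε • 1) (b + ε • 1) := by
  have hs : 0 ≤ t / α := div_nonneg ht hα.le
  have hsa : (t / α) • b ≤ t • a := by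
    calc (t / α) • b ≤ (t / α) • (α • a) := smul_le_smul_of_nonneg_left hba hs
      _ = t • a := by rw [smul_smul, div_mul_cancel₀ t hα.ne']
  have hcoef : t / (t + α) = t / α / (t / α + 1) := by field_simp
  rw [hcoef]
  exact (smul_le_parallelSum_smul_add_smul_one hb hs hε).trans <| parallelSum_mono_left
    (isStrictlyPositive_add_smul_one (smul_nonneg hs hb) hε)
    (isStrictlyPositive_add_smul_one hb hε) (add_le_add_left hsa _)

end CStarAlgebra

namespace ContinuousLinearMap

variable {𝕜 E ι : Type*} [RCLike 𝕜] [NormedAddCommGroup E] [InnerProductSpace 𝕜 E]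
  {l : Filter ι} [l.NeBot]

lemma IsPositive.of_tendsto_apply {T : ι → E →L[𝕜] E} {T₀ : E →L[𝕜] E}
    (hT : ∀ x, Tendsto (fun i => T i x) l (𝓝 (T₀ x))) (hpos : ∀ᶠ i in l, (T i).IsPositive) :
    T₀.IsPositive := by
  refine ⟨fun x y => tendsto_nhds_unique ((hT x).inner tendsto_const_nhds) ?_, fun x => ?_⟩
  · exact (tendsto_const_nhds.inner (hT y)).congr' (hpos.mono fun i hi => (hi.1 x y).symm)
  · exact ge_of_tendsto (RCLike.continuous_re.tendsto _ |>.comp ((hT x).inner tendsto_const_nhds))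
      (hpos.mono fun i hi => hi.2 x)

lemma le_of_tendsto_apply {S T : ι → E →L[𝕜] E} {S₀ T₀ : E →L[𝕜] E}
    (hS : ∀ x, Tendsto (fun i => S i x) l (𝓝 (S₀ x)))
    (hT : ∀ x, Tendsto (fun i => T i x) l (𝓝 (T₀ x))) (hST : ∀ᶠ i in l, S i ≤ T i) :
    S₀ ≤ T₀ :=
  IsPositive.of_tendsto_apply (fun x => (hT x).sub (hS x)) hST

end ContinuousLinearMap

section

variable {A : Type*} [NonUnitalCStarAlgebra A] [PartialOrder A] [StarOrderedRing A]

lemma tendsto_of_le_of_sub_le_smul {ι : Type*} {l : Filter ι} {b : A} {p : ι → A} {c : ι → ℝ}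
    (hc : Tendsto c l (𝓝 0)) (hpb : ∀ i, p i ≤ b) (hbp : ∀ i, b - p i ≤ c i • b) :
    Tendsto p l (𝓝 b) := by
  rw [tendsto_iff_norm_sub_tendsto_zero]
  refine squeeze_zero (fun _ => norm_nonneg _) (fun i => ?_) (by simpa using (hc.smul_const b).norm)
  rw [norm_sub_rev]
  exact CStarAlgebra.norm_le_norm_of_nonneg_of_le (sub_nonneg.2 (hpb i)) (hbp i)

end

section

variable {H : Type*} [NormedAddCommGroup H] [InnerProductSpace ℂ H] {a a' b c p p' : H →L[ℂ] H}

/-- `p = a : b` in the paper's notation: the strong limit of `(a + ε) : (b + ε)` as `ε ↓ 0`. -/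
def HasParallelSum (a b p : H →L[ℂ] H) : Prop :=
  ∀ ξ : H, Tendsto (fun ε : ℝ => parallelSum (a + ε • 1) (b + ε • 1) ξ) (𝓝[>] 0) (𝓝 (p ξ))

namespace HasParallelSum

lemma le_of_forall_le (hp : HasParallelSum a b p)
    (h : ∀ ε : ℝ, 0 < ε → c ≤ parallelSum (a + ε • 1) (b + ε • 1)) : c ≤ p :=
  ContinuousLinearMap.le_of_tendsto_apply (fun _ => tendsto_const_nhds) hp
    (eventually_mem_nhdsWithin.mono fun ε hε => h ε hε)

variable [CompleteSpace H]

lemma nonneg (hp : HasParallelSum a b p) (ha : 0 ≤ a) (hb : 0 ≤ b) : 0 ≤ p :=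
  hp.le_of_forall_le fun _ hε =>
    ((isStrictlyPositive_add_smul_one ha hε).parallelSum
      (isStrictlyPositive_add_smul_one hb hε)).nonneg

lemma le_right (hp : HasParallelSum a b p) (ha : 0 ≤ a) (hb : 0 ≤ b) : p ≤ b := by
  refine ContinuousLinearMap.le_of_tendsto_apply hp (fun ξ => ?_)
    (eventually_mem_nhdsWithin.mono fun ε hε => parallelSum_le_right
      (isStrictlyPositive_add_smul_one ha hε) (isStrictlyPositive_add_smul_one hb hε))
  have hcont : Continuous fun ε : ℝ => b ξ + ε • ξ := by fun_prop
  simpa using (hcont.tendsto' 0 (b ξ) (by simp)).mono_left nhdsWithin_le_nhds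

lemma mono_left (hp : HasParallelSum a b p) (hp' : HasParallelSum a' b p') (ha : 0 ≤ a)
    (hb : 0 ≤ b) (haa' : a ≤ a') : p ≤ p' :=
  ContinuousLinearMap.le_of_tendsto_apply hp hp' <| eventually_mem_nhdsWithin.mono fun _ hε =>
    parallelSum_mono_left (isStrictlyPositive_add_smul_one ha hε)
      (isStrictlyPositive_add_smul_one hb hε) (add_le_add_left haa' _)

lemma sub_le_smul_of_le_smul {t α : ℝ} (hp : HasParallelSum (t • a) b p) (ha : 0 ≤ a)
    (hb : 0 ≤ b) (hba : b ≤ α • a) (ht : 0 ≤ t) : b - p ≤ (α / (t + α)) • b := by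
  rcases le_or_gt α 0 with hα | hα
  · obtain rfl : b = 0 := le_antisymm (hba.trans (smul_nonpos_of_nonpos_of_nonneg hα ha)) hb
    simpa using hp.nonneg (smul_nonneg ht ha) le_rfl
  · have hlow : (t / (t + α)) • b ≤ p :=
      hp.le_of_forall_le fun _ hε => smul_le_parallelSum_of_le_smul hb hα hba ht hε
    have hcoef : α / (t + α) = 1 - t / (t + α) := by field_simp; ring
    rw [hcoef, sub_smul, one_smul]
    exact sub_le_sub_left hlow b

end HasParallelSum

end

theorem ando_absolute_continuity_lemma_general {H : Type*} [NormedAddCommGroup H]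
    [InnerProductSpace ℂ H] [CompleteSpace H]
    (A B : H →L[ℂ] H) (hA : A.IsPositive) (hB : B.IsPositive)
    (α : ℝ) (hBA : (α • A - B).IsPositive)
    (P : ℕ → (H →L[ℂ] H))
    (hP : ∀ n : ℕ, ∀ ξ : H, Tendsto (fun ε : ℝ =>
        (Ring.inverse (Ring.inverse ((n : ℝ) • A + ε • 1) + Ring.inverse (B + ε • 1))) ξ)
      (𝓝[>] (0 : ℝ)) (𝓝 (P n ξ))) :
    (∀ n : ℕ, 1 ≤ n → ((α / (n + α)) • B - (B - P n)).IsPositive) ∧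
      (∀ n : ℕ, 1 ≤ n → (P (n + 1) - P n).IsPositive) ∧
      ∀ ξ : H, Tendsto (fun n : ℕ => P n ξ) atTop (𝓝 (B ξ)) := by
  rw [← ContinuousLinearMap.nonneg_iff_isPositive] at hA hB
  have hPn (n : ℕ) : HasParallelSum ((n : ℝ) • A) B (P n) := hP n
  have hgap (n : ℕ) : B - P n ≤ (α / (n + α)) • B :=
    (hPn n).sub_le_smul_of_le_smul hA hB hBA n.cast_nonneg
  refine ⟨fun n _ => hgap n, fun n _ => ?_, fun ξ => ?_⟩
  · exact (hPn n).mono_left (hPn (n + 1)) (smul_nonneg n.cast_nonneg hA) hB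
      (smul_le_smul_of_nonneg_right (by simp) hA)
  · have hc : Tendsto (fun n : ℕ => α / (n + α)) atTop (𝓝 0) :=
      tendsto_const_nhds.div_atTop (tendsto_atTop_add_const_right _ α tendsto_natCast_atTop_atTop)
    have hP_le (n : ℕ) : P n ≤ B := (hPn n).le_right (smul_nonneg n.cast_nonneg hA) hB
    exact ((ContinuousLinearMap.apply ℂ H ξ).continuous.tendsto B).comp
      (tendsto_of_le_of_sub_le_smul hc hP_le hgap)

/-- let `A, B` be bounded positive operators with `C = A + B`, and suppose
`B ≤ αA` for some `α ≥ 0`. Let `Pₙ = nA : B` be the parallel sums (strong limits of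
`((nA+εI)⁻¹ + (B+εI)⁻¹)⁻¹` as `ε ↓ 0`). Then `B − (nA : B) ≤ (α/(n+α))·B` in the Loewner
order for all `n ≥ 1`, and consequently `nA : B` increases strongly to `B`. -/
theorem ando_absolute_continuity_lemma {H : Type*} [NormedAddCommGroup H]
    [InnerProductSpace ℂ H] [CompleteSpace H]
    (A B : H →L[ℂ] H) (hA : A.IsPositive) (hB : B.IsPositive)
    (C : H →L[ℂ] H) (hC : C = A + B)
    (α : ℝ) (hα : 0 ≤ α) (hBA : (α • A - B).IsPositive)
    (P : ℕ → (H →L[ℂ] H))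
    (hP : ∀ n : ℕ, ∀ ξ : H, Tendsto (fun ε : ℝ =>
        (Ring.inverse (Ring.inverse ((n : ℝ) • A + ε • 1) + Ring.inverse (B + ε • 1))) ξ)
      (𝓝[>] (0 : ℝ)) (𝓝 (P n ξ))) :
    (∀ n : ℕ, 1 ≤ n → ((α / (n + α)) • B - (B - P n)).IsPositive) ∧
      (∀ n : ℕ, 1 ≤ n → (P (n + 1) - P n).IsPositive) ∧
      ∀ ξ : H, Tendsto (fun n : ℕ => P n ξ) atTop (𝓝 (B ξ)) :=
  ando_absolute_continuity_lemma_general A B hA hB α hBA P hP
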